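/- Let U, V, X, Y1, Y2 be finitely-valued random variables, with X, Y1, Y2 Boolean-valued, such that (Y1,Y2) is conditionally independent of (U,V) given X and, conditionally on X, (Y1,Y2) is distributed according to the BSSC with p = 1/2. If min{P(X=0), P(X=1)} ≤ 1/5, then I(U;Y1) + I(V;Y2) − I(U;V) ≤ max{I(X;Y1), I(X;Y2)}. -/

import Mathlib

open MeasureTheory Real

noncomputable def prob {Ω : Type*} [MeasurableSpace Ω] (μ : Measure Ω) {A : Type*}
    (X : Ω → A) (a : A) : ℝ :=
  (μ (X ⁻¹' {a})).toReal

noncomputable def entropy {Ω : Type*} [MeasurableSpace Ω] (μ : Measure Ω) {A : Type*}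
    [Fintype A] (X : Ω → A) : ℝ :=
  ∑ a, Real.negMulLog (prob μ X a)

noncomputable def mutualInfo {Ω : Type*} [MeasurableSpace Ω] (μ : Measure Ω)
    {A B : Type*} [Fintype A] [Fintype B] (X : Ω → A) (Y : Ω → B) : ℝ :=
  entropy μ X + entropy μ Y - entropy μ (fun ω => (X ω, Y ω))

noncomputable def condMutualInfo {Ω : Type*} [MeasurableSpace Ω] (μ : Measure Ω)
    {A B C : Type*} [Fintype A] [Fintype B] [Fintype C]
    (X : Ω → A) (Y : Ω → B) (Z : Ω → C) : ℝ :=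
  entropy μ (fun ω => (X ω, Z ω)) + entropy μ (fun ω => (Y ω, Z ω))
    - entropy μ (fun ω => (X ω, Y ω, Z ω)) - entropy μ Z

/-- `W` and `Y` are conditionally independent given `X` (Markov chain `W → X → Y`). -/
def CondIndepGiven {Ω : Type*} [MeasurableSpace Ω] (μ : Measure Ω) {A B C : Type*}
    (W : Ω → A) (X : Ω → B) (Y : Ω → C) : Prop :=
  ∀ a b c, prob μ (fun ω => (W ω, X ω, Y ω)) (a, b, c) * prob μ X b
    = prob μ (fun ω => (W ω, X ω)) (a, b) * prob μ (fun ω => (X ω, Y ω)) (b, c)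

noncomputable def bsscK (x y1 y2 : Bool) : ℝ :=
  if x = false then (if y2 = false then 1 / 2 else 0)
  else (if y1 = true then 1 / 2 else 0)

def IsBSSC {Ω : Type*} [MeasurableSpace Ω] (μ : Measure Ω) (X Y1 Y2 : Ω → Bool) : Prop :=
  ∀ x y1 y2, prob μ (fun ω => (X ω, Y1 ω, Y2 ω)) (x, y1, y2) = prob μ X x * bsscK x y1 y2

noncomputable def binH (x : ℝ) : ℝ := Real.negMulLog x + Real.negMulLog (1 - x)

noncomputable def fskew (η : ℝ) : ℝ := binH (η / 2) - binH ((1 - η) / 2)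

/-!
By the symmetry `X ↦ ¬X`, `(Y₁, Y₂) ↦ (¬Y₂, ¬Y₁)`, `U ↔ V` of the BSSC we may assume
`m = P(X = 1) ≤ 1/5` and bound the left side by `I(X;Y₂) = H(Y₂) - m log 2`. Expanding the mutual
informations, this follows from three inequalities:
* `H(U,V,Y₂) ≥ H(U,V) + m log 2`: conditioning reduces entropy, and given `X` the output `Y₂` has
  entropy `m log 2`;
* `H(U,Y₂) + H(V,Y₂) ≥ H(U,V,Y₂) + H(Y₂)`, submodularity of entropy;
* `H(U,Y₂) - H(U,Y₁) ≤ H(Y₂) - H(Y₁)`.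
For the last one, `H(U,Y₂) - H(U,Y₁) = ∑ₐ P(U = a) f(P(X = 1 | U = a))` with `f = fskew`, while
`H(Y₂) - H(Y₁) = f(m)`, so it is Jensen's inequality for `f` at `m`. The function `f` is concave on
`[0, 1/2]` and convex on `[1/2, 1]`, and for `m ≤ 1/5` its tangent at `m` still lies above its
graph on all of `[0, 1]`.
-/

section Prob

variable {Ω : Type*} [MeasurableSpace Ω] (μ : Measure Ω)

lemma prob_nonneg {A : Type*} (X : Ω → A) (a : A) : 0 ≤ prob μ X a := ENNReal.toReal_nonneg

lemma prob_congr {A B : Type*} {X : Ω → A} {Y : Ω → B} {a : A} {b : B}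
    (h : ∀ ω, X ω = a ↔ Y ω = b) : prob μ X a = prob μ Y b := by
  have : X ⁻¹' {a} = Y ⁻¹' {b} := by ext ω; exact h ω
  rw [prob, prob, this]

lemma prob_unit_prod {A : Type*} (W : Ω → A) (a : A) :
    prob μ (fun ω => ((), W ω)) ((), a) = prob μ W a :=
  prob_congr μ fun ω => by simp

variable [IsFiniteMeasure μ]

lemma prob_mono {A B : Type*} {X : Ω → A} {Y : Ω → B} {a : A} {b : B}
    (h : ∀ ω, X ω = a → Y ω = b) : prob μ X a ≤ prob μ Y b :=
  ENNReal.toReal_mono (measure_ne_top μ _) (measure_mono fun ω => h ω)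

lemma prob_comp_eq_sum {A B : Type*} [Fintype A] [MeasurableSpace A]
    [MeasurableSingletonClass A] [DecidableEq B] {W : Ω → A} (hW : Measurable W) (g : A → B)
    (b : B) :
    prob μ (fun ω => g (W ω)) b = ∑ a with g a = b, prob μ W a := by
  have hunion : (fun ω => g (W ω)) ⁻¹' {b} = ⋃ a ∈ ({a | g a = b} : Finset A), W ⁻¹' {a} := by
    ext ω
    simp [eq_comm]
  have hdisj : Set.PairwiseDisjoint (({a | g a = b} : Finset A) : Set A)
      (fun a => W ⁻¹' {a}) :=
    fun a _ a' _ ha => Set.disjoint_left.2 fun ω h h' => ha (h.symm.trans h')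
  rw [prob, hunion, measure_biUnion_finset hdisj fun a _ => hW (measurableSet_singleton a),
    ENNReal.toReal_sum fun a _ => measure_ne_top μ _]
  rfl

variable {A B : Type*} [Fintype A] [MeasurableSpace A] [MeasurableSingletonClass A]
  [Fintype B] [MeasurableSpace B] [MeasurableSingletonClass B]

lemma prob_eq_sum_prob_prod {X : Ω → A} {Y : Ω → B} (hX : Measurable X) (hY : Measurable Y)
    (a : A) : prob μ X a = ∑ b, prob μ (fun ω => (X ω, Y ω)) (a, b) := by
  classical
  rw [show X = fun ω => ((X ω, Y ω)).1 from rfl, prob_comp_eq_sum μ (hX.prodMk hY),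
    Finset.sum_filter, Fintype.sum_prod_type, Finset.sum_comm]
  simp

lemma sum_prob_prod_eq_prob {X : Ω → A} {Y : Ω → B} (hX : Measurable X) (hY : Measurable Y)
    (b : B) : ∑ a, prob μ (fun ω => (X ω, Y ω)) (a, b) = prob μ Y b := by
  rw [prob_eq_sum_prob_prod μ hY hX b]
  exact Finset.sum_congr rfl fun a _ => prob_congr μ fun ω => by simp [and_comm]

lemma prob_map_fst_eq_sum {A' : Type*} [DecidableEq A'] {W : Ω → A} {T : Ω → B}
    (hW : Measurable W) (hT : Measurable T) (f : A → A') (a' : A') (b : B) :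
    prob μ (fun ω => (f (W ω), T ω)) (a', b)
      = ∑ a with f a = a', prob μ (fun ω => (W ω, T ω)) (a, b) := by
  classical
  rw [show (fun ω => (f (W ω), T ω)) = fun ω => Prod.map f id (W ω, T ω) from rfl,
    prob_comp_eq_sum μ (hW.prodMk hT), Finset.sum_filter, Finset.sum_filter,
    Fintype.sum_prod_type]
  simp [Prod.ext_iff, ite_and]

end Prob

lemma sum_prob_eq_one {Ω A : Type*} [MeasurableSpace Ω] (μ : Measure Ω) [IsProbabilityMeasure μ]
    [Fintype A] [MeasurableSpace A] [MeasurableSingletonClass A] {X : Ω → A} (hX : Measurable X) :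
    ∑ a, prob μ X a = 1 := by
  classical
  have := prob_comp_eq_sum μ hX (fun _ => ()) ()
  simp_all [prob]

section Entropy

variable {Ω : Type*} [MeasurableSpace Ω] (μ : Measure Ω)

lemma prob_congr_equiv {A B : Type*} {X : Ω → A} {Y : Ω → B} (e : A ≃ B)
    (h : ∀ ω, Y ω = e (X ω)) (a : A) : prob μ Y (e a) = prob μ X a :=
  prob_congr μ fun ω => by rw [h ω, e.apply_eq_iff_eq]

lemma entropy_congr_equiv {A B : Type*} [Fintype A] [Fintype B] {X : Ω → A} {Y : Ω → B}
    (e : A ≃ B) (h : ∀ ω, Y ω = e (X ω)) : entropy μ Y = entropy μ X := by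
  rw [entropy, entropy, ← e.sum_comp]
  simp only [prob_congr_equiv μ e h]

lemma entropy_prod_comm {A B : Type*} [Fintype A] [Fintype B] (X : Ω → A) (Y : Ω → B) :
    entropy μ (fun ω => (Y ω, X ω)) = entropy μ (fun ω => (X ω, Y ω)) :=
  entropy_congr_equiv μ (Equiv.prodComm A B) fun _ => rfl

lemma mutualInfo_comm {A B : Type*} [Fintype A] [Fintype B] (X : Ω → A) (Y : Ω → B) :
    mutualInfo μ Y X = mutualInfo μ X Y := by
  rw [mutualInfo, mutualInfo, entropy_prod_comm]
  ring

lemma mutualInfo_congr_equiv {A A' B B' : Type*} [Fintype A] [Fintype A'] [Fintype B]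
    [Fintype B'] {X : Ω → A} {X' : Ω → A'} {Y : Ω → B} {Y' : Ω → B'} (e₁ : A ≃ A') (e₂ : B ≃ B')
    (h₁ : ∀ ω, X' ω = e₁ (X ω)) (h₂ : ∀ ω, Y' ω = e₂ (Y ω)) :
    mutualInfo μ X' Y' = mutualInfo μ X Y := by
  rw [mutualInfo, mutualInfo, entropy_congr_equiv μ e₁ h₁, entropy_congr_equiv μ e₂ h₂,
    entropy_congr_equiv μ (X := fun ω => (X ω, Y ω)) (e₁.prodCongr e₂) fun ω => by simp [h₁, h₂]]

lemma entropy_unit_prod {A : Type*} [Fintype A] (W : Ω → A) :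
    entropy μ (fun ω => ((), W ω)) = entropy μ W :=
  entropy_congr_equiv μ (Equiv.punitProd A).symm fun _ => rfl

end Entropy

lemma mul_log_add_mul_log_sub_le {p a b s : ℝ} (hp : 0 ≤ p) (hpa : p ≤ a) (hpb : p ≤ b)
    (has : a ≤ s) : p * log a + p * log b - p * log s - p * log p ≤ a * b / s - p := by
  rcases hp.eq_or_lt with rfl | hp
  · simpa using div_nonneg (mul_nonneg hpa hpb) (hpa.trans has)
  · have ha := hp.trans_le hpa
    have hb := hp.trans_le hpb
    have hs := ha.trans_le has
    have h := mul_le_mul_of_nonneg_left (log_le_sub_one_of_pos (by positivity : 0 < a * b / s / p))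
      hp.le
    rw [log_div (by positivity) hp.ne', log_div (by positivity) hs.ne', log_mul ha.ne' hb.ne',
      mul_sub (a := p) (c := 1), mul_div_cancel₀ _ hp.ne', mul_one] at h
    linarith

/-- Subadditivity of entropy, for an unnormalised joint distribution `p` on `ι × κ`. -/
lemma sum_negMulLog_add_negMulLog_sum_le {ι κ : Type*} [Fintype ι] [Fintype κ]
    (p : ι → κ → ℝ) (hp : ∀ i j, 0 ≤ p i j) :
    ∑ i, ∑ j, negMulLog (p i j) + negMulLog (∑ i, ∑ j, p i j)
      ≤ ∑ i, negMulLog (∑ j, p i j) + ∑ j, negMulLog (∑ i, p i j) := by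
  set a := fun i => ∑ j, p i j
  set b := fun j => ∑ i, p i j
  set s := ∑ i, ∑ j, p i j
  have ha0 : ∀ i, 0 ≤ a i := fun i => Finset.sum_nonneg fun j _ => hp i j
  have hs0 : 0 ≤ s := Finset.sum_nonneg fun i _ => ha0 i
  -- Gibbs' inequality between `p` and the product of its marginals
  have gibbs : ∑ i, ∑ j, (p i j * log (a i) + p i j * log (b j) - p i j * log s
      - p i j * log (p i j)) ≤ 0 := by
    calc _ ≤ ∑ i, ∑ j, (a i * b j / s - p i j) :=
          Finset.sum_le_sum fun i _ => Finset.sum_le_sum fun j _ =>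
            mul_log_add_mul_log_sub_le (hp i j) (Finset.single_le_sum (fun j _ => hp i j) (by simp))
              (Finset.single_le_sum (fun i _ => hp i j) (by simp))
              (Finset.single_le_sum (fun i _ => ha0 i) (by simp))
      _ = s * s / s - s := by
          simp only [Finset.sum_sub_distrib, ← Finset.sum_div, ← Finset.mul_sum, ← Finset.sum_mul,
            show ∑ j, b j = s from Finset.sum_comm]
          rfl
      _ ≤ 0 := by
          rcases hs0.eq_or_lt with h | h
          · simp [← h]
          · rw [mul_div_cancel_right₀ _ h.ne', sub_self]
  have hA : ∑ i, negMulLog (a i) = -∑ i, ∑ j, p i j * log (a i) := by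
    simp [negMulLog, a, Finset.sum_mul]
  have hB : ∑ j, negMulLog (b j) = -∑ i, ∑ j, p i j * log (b j) := by
    rw [Finset.sum_comm]
    simp [negMulLog, b, Finset.sum_mul]
  have hS : negMulLog s = -∑ i, ∑ j, p i j * log s := by
    simp [negMulLog, s, Finset.sum_mul]
  have hP : ∑ i, ∑ j, negMulLog (p i j) = -∑ i, ∑ j, p i j * log (p i j) := by
    simp [negMulLog]
  simp only [Finset.sum_sub_distrib, Finset.sum_add_distrib] at gibbs
  rw [hA, hB, hS, hP]
  linarith

section Submodularity

variable {Ω : Type*} [MeasurableSpace Ω] (μ : Measure Ω) [IsFiniteMeasure μ]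
  {A B C : Type*} [Fintype A] [MeasurableSpace A] [MeasurableSingletonClass A]
  [Fintype B] [MeasurableSpace B] [MeasurableSingletonClass B]
  [Fintype C] [MeasurableSpace C] [MeasurableSingletonClass C]

lemma condMutualInfo_nonneg {X : Ω → A} {Y : Ω → B} {Z : Ω → C} (hX : Measurable X)
    (hY : Measurable Y) (hZ : Measurable Z) : 0 ≤ condMutualInfo μ X Y Z := by
  set p := fun x y z => prob μ (fun ω => (X ω, Y ω, Z ω)) (x, y, z)
  have hXZ : ∀ x z, prob μ (fun ω => (X ω, Z ω)) (x, z) = ∑ y, p x y z := fun x z => by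
    rw [prob_eq_sum_prob_prod μ (hX.prodMk hZ) hY]
    exact Finset.sum_congr rfl fun y _ => prob_congr μ fun ω => by simp only [Prod.mk.injEq]; tauto
  have hYZ : ∀ y z, prob μ (fun ω => (Y ω, Z ω)) (y, z) = ∑ x, p x y z := fun y z => by
    rw [prob_eq_sum_prob_prod μ (hY.prodMk hZ) hX]
    exact Finset.sum_congr rfl fun x _ => prob_congr μ fun ω => by simp only [Prod.mk.injEq]; tauto
  have hZ' : ∀ z, prob μ Z z = ∑ x, ∑ y, p x y z := fun z => by
    rw [← sum_prob_prod_eq_prob μ hX hZ]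
    simp only [hXZ]
  have hXYZ : entropy μ (fun ω => (X ω, Y ω, Z ω)) = ∑ z, ∑ x, ∑ y, negMulLog (p x y z) := by
    simp only [entropy, Fintype.sum_prod_type]
    exact (Finset.sum_congr rfl fun x _ => Finset.sum_comm).trans Finset.sum_comm
  have hXZ' : entropy μ (fun ω => (X ω, Z ω)) = ∑ z, ∑ x, negMulLog (∑ y, p x y z) := by
    rw [entropy, Fintype.sum_prod_type, Finset.sum_comm]
    simp only [hXZ]
  have hYZ' : entropy μ (fun ω => (Y ω, Z ω)) = ∑ z, ∑ y, negMulLog (∑ x, p x y z) := by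
    rw [entropy, Fintype.sum_prod_type, Finset.sum_comm]
    simp only [hYZ]
  have hZ'' : entropy μ Z = ∑ z, negMulLog (∑ x, ∑ y, p x y z) := by
    simp only [entropy, hZ']
  have := Finset.sum_le_sum fun z (_ : z ∈ Finset.univ) =>
    sum_negMulLog_add_negMulLog_sum_le (fun x y => p x y z) fun x y => prob_nonneg μ _ _
  simp only [Finset.sum_add_distrib] at this
  rw [condMutualInfo, hXYZ, hXZ', hYZ', hZ'']
  linarith

end Submodularity

/-- `k x y` plays the role of `P(Y = y | X = x)`, and `Z → X → Y` is a Markov chain. -/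
def IsChannelOutput {Ω C D E : Type*} [MeasurableSpace Ω] (μ : Measure Ω) (Z : Ω → C)
    (X : Ω → D) (Y : Ω → E) (k : D → E → ℝ) : Prop :=
  ∀ z x y, prob μ (fun ω => (Z ω, X ω, Y ω)) (z, x, y) = prob μ (fun ω => (Z ω, X ω)) (z, x) * k x y

lemma CondIndepGiven.isChannelOutput {Ω C D E : Type*} [MeasurableSpace Ω] {μ : Measure Ω}
    [IsFiniteMeasure μ] {Z : Ω → C} {X : Ω → D} {Y : Ω → E} {k : D → E → ℝ}
    (h : CondIndepGiven μ Z X Y)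
    (hk : ∀ x y, prob μ (fun ω => (X ω, Y ω)) (x, y) = prob μ X x * k x y) :
    IsChannelOutput μ Z X Y k := by
  intro z x y
  rcases (prob_nonneg μ X x).eq_or_lt with hx | hx
  · have hZXY : prob μ (fun ω => (Z ω, X ω, Y ω)) (z, x, y) ≤ prob μ X x :=
      prob_mono μ fun ω h => by simp_all
    have hZX : prob μ (fun ω => (Z ω, X ω)) (z, x) ≤ prob μ X x :=
      prob_mono μ fun ω h => by simp_all
    rw [le_antisymm (hx ▸ hZXY) (prob_nonneg μ _ _), le_antisymm (hx ▸ hZX) (prob_nonneg μ _ _),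
      zero_mul]
  · refine mul_right_cancel₀ hx.ne' ?_
    rw [h z x y, hk]
    ring

lemma CondIndepGiven.congr_equiv {Ω A A' B B' C C' : Type*} [MeasurableSpace Ω]
    {μ : Measure Ω} {W : Ω → A} {X : Ω → B} {Y : Ω → C} {W' : Ω → A'} {X' : Ω → B'}
    {Y' : Ω → C'} (h : CondIndepGiven μ W X Y) (e₁ : A ≃ A') (e₂ : B ≃ B') (e₃ : C ≃ C')
    (h₁ : ∀ ω, W' ω = e₁ (W ω)) (h₂ : ∀ ω, X' ω = e₂ (X ω)) (h₃ : ∀ ω, Y' ω = e₃ (Y ω)) :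
    CondIndepGiven μ W' X' Y' := by
  intro a b c
  obtain ⟨a, rfl⟩ := e₁.surjective a
  obtain ⟨b, rfl⟩ := e₂.surjective b
  obtain ⟨c, rfl⟩ := e₃.surjective c
  have h₃' : prob μ (fun ω => (W' ω, X' ω, Y' ω)) (e₁ a, e₂ b, e₃ c)
      = prob μ (fun ω => (W ω, X ω, Y ω)) (a, b, c) := prob_congr μ fun ω => by simp [h₁, h₂, h₃]
  have h₁' : prob μ X' (e₂ b) = prob μ X b := prob_congr μ fun ω => by simp [h₂]
  have h₁₂ : prob μ (fun ω => (W' ω, X' ω)) (e₁ a, e₂ b) = prob μ (fun ω => (W ω, X ω)) (a, b) :=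
    prob_congr μ fun ω => by simp [h₁, h₂]
  have h₂₃ : prob μ (fun ω => (X' ω, Y' ω)) (e₂ b, e₃ c) = prob μ (fun ω => (X ω, Y ω)) (b, c) :=
    prob_congr μ fun ω => by simp [h₂, h₃]
  rw [h₃', h₁', h₁₂, h₂₃]
  exact h a b c

section Channel

variable {Ω : Type*} [MeasurableSpace Ω] {μ : Measure Ω} [IsFiniteMeasure μ]
  {C D E : Type*} [Fintype C] [MeasurableSpace C] [MeasurableSingletonClass C]
  [Fintype D] [MeasurableSpace D] [MeasurableSingletonClass D]
  [Fintype E] {Z : Ω → C} {X : Ω → D} {Y : Ω → E} {k : D → E → ℝ}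

lemma IsChannelOutput.entropy_eq (h : IsChannelOutput μ Z X Y k) (hZ : Measurable Z)
    (hX : Measurable X) (hk : ∀ x, ∑ y, k x y = 1) :
    entropy μ (fun ω => (Z ω, X ω, Y ω))
      = entropy μ (fun ω => (Z ω, X ω)) + ∑ x, prob μ X x * ∑ y, negMulLog (k x y) := by
  have hsplit : ∀ z x, ∑ y, negMulLog (prob μ (fun ω => (Z ω, X ω)) (z, x) * k x y)
      = negMulLog (prob μ (fun ω => (Z ω, X ω)) (z, x))
        + prob μ (fun ω => (Z ω, X ω)) (z, x) * ∑ y, negMulLog (k x y) := fun z x => by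
    simp only [negMulLog_mul, Finset.sum_add_distrib, ← Finset.sum_mul, ← Finset.mul_sum, hk,
      one_mul]
  simp only [entropy, Fintype.sum_prod_type, h _ _ _, hsplit, Finset.sum_add_distrib]
  rw [Finset.sum_comm (f := fun z x => prob μ (fun ω => (Z ω, X ω)) (z, x) * _)]
  simp only [← Finset.sum_mul, sum_prob_prod_eq_prob μ hZ hX]

variable [MeasurableSpace E] [MeasurableSingletonClass E]

lemma IsChannelOutput.comp_left {C' : Type*} (h : IsChannelOutput μ Z X Y k)
    (hZ : Measurable Z) (hX : Measurable X) (hY : Measurable Y) (f : C → C') :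
    IsChannelOutput μ (fun ω => f (Z ω)) X Y k := by
  classical
  intro c x y
  rw [prob_map_fst_eq_sum μ hZ (hX.prodMk hY), prob_map_fst_eq_sum μ hZ hX, Finset.sum_mul]
  exact Finset.sum_congr rfl fun z _ => h z x y

lemma IsChannelOutput.fst {E' : Type*} [Fintype E'] [MeasurableSpace E']
    [MeasurableSingletonClass E'] {Y' : Ω → E'} {k : D → E × E' → ℝ}
    (h : IsChannelOutput μ Z X (fun ω => (Y ω, Y' ω)) k) (hZ : Measurable Z) (hX : Measurable X)
    (hY : Measurable Y) (hY' : Measurable Y') :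
    IsChannelOutput μ Z X Y (fun x y => ∑ y', k x (y, y')) := by
  intro z x y
  rw [prob_eq_sum_prob_prod μ (hZ.prodMk (hX.prodMk hY)) hY', Finset.mul_sum]
  refine Finset.sum_congr rfl fun y' _ => ?_
  rw [← h]
  exact prob_congr μ fun ω => by simp only [Prod.mk.injEq]; tauto

lemma IsChannelOutput.snd {E' : Type*} [Fintype E'] [MeasurableSpace E']
    [MeasurableSingletonClass E'] {Y' : Ω → E'} {k : D → E' × E → ℝ}
    (h : IsChannelOutput μ Z X (fun ω => (Y' ω, Y ω)) k) (hZ : Measurable Z) (hX : Measurable X)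
    (hY : Measurable Y) (hY' : Measurable Y') :
    IsChannelOutput μ Z X Y (fun x y => ∑ y', k x (y', y)) := by
  intro z x y
  rw [prob_eq_sum_prob_prod μ (hZ.prodMk (hX.prodMk hY)) hY', Finset.mul_sum]
  refine Finset.sum_congr rfl fun y' _ => ?_
  rw [← h]
  exact prob_congr μ fun ω => by simp only [Prod.mk.injEq]; tauto

lemma IsChannelOutput.prob_prod (h : IsChannelOutput μ Z X Y k) (hZ : Measurable Z)
    (hX : Measurable X) (hY : Measurable Y) (z : C) (y : E) :
    prob μ (fun ω => (Z ω, Y ω)) (z, y) = ∑ x, prob μ (fun ω => (Z ω, X ω)) (z, x) * k x y := by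
  rw [prob_eq_sum_prob_prod μ (hZ.prodMk hY) hX]
  refine Finset.sum_congr rfl fun x _ => ?_
  rw [← h]
  exact prob_congr μ fun ω => by simp only [Prod.mk.injEq]; tauto

end Channel

noncomputable def fskewDeriv (q : ℝ) : ℝ :=
  (log (2 - q) - log q + log (1 + q) - log (1 - q)) / 2

noncomputable def fskewDeriv2 (q : ℝ) : ℝ := (2 * q - 1) / (q * (2 - q) * (1 - q ^ 2))

lemma continuous_fskew : Continuous fskew := by
  unfold fskew binH
  fun_prop

lemma hasDerivAt_negMulLog_affine {a b q : ℝ} (h : a * q + b ≠ 0) :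
    HasDerivAt (fun x => negMulLog (a * x + b)) ((-log (a * q + b) - 1) * a) q := by
  simpa [Function.comp_def] using
    (hasDerivAt_negMulLog h).comp q (((hasDerivAt_id q).const_mul a).add_const b)

lemma hasDerivAt_fskew {q : ℝ} (h0 : 0 < q) (h1 : q < 1) :
    HasDerivAt fskew (fskewDeriv q) q := by
  have hf : fskew = fun x => negMulLog ((1 / 2) * x + 0) + negMulLog ((-1 / 2) * x + 1)
      - (negMulLog ((-1 / 2) * x + 1 / 2) + negMulLog ((1 / 2) * x + 1 / 2)) := by
    funext x
    simp only [fskew, binH]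
    ring_nf
  rw [hf]
  refine (((hasDerivAt_negMulLog_affine ?_).add (hasDerivAt_negMulLog_affine ?_)).sub
    ((hasDerivAt_negMulLog_affine ?_).add (hasDerivAt_negMulLog_affine ?_))).congr_deriv ?_
  any_goals (apply ne_of_gt; linarith)
  have hlog : ∀ t c : ℝ, 0 < c → t = c / 2 → log t = log c - log 2 := fun t c hc ht => by
    rw [ht, log_div hc.ne' two_ne_zero]
  rw [hlog (1 / 2 * q + 0) q h0 (by ring), hlog (-1 / 2 * q + 1) (2 - q) (by linarith) (by ring),
    hlog (-1 / 2 * q + 1 / 2) (1 - q) (by linarith) (by ring),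
    hlog (1 / 2 * q + 1 / 2) (1 + q) (by linarith) (by ring), fskewDeriv]
  ring

lemma hasDerivAt_fskewDeriv {q : ℝ} (h0 : 0 < q) (h1 : q < 1) :
    HasDerivAt fskewDeriv (fskewDeriv2 q) q := by
  have hlog : ∀ a b : ℝ, a * q + b ≠ 0 →
      HasDerivAt (fun x => log (a * x + b)) (a / (a * q + b)) q := fun a b h => by
    simpa [Function.comp_def, div_eq_inv_mul] using
      (hasDerivAt_log h).comp q (((hasDerivAt_id q).const_mul a).add_const b)
  have h := ((((hlog (-1) 2 (by linarith)).sub (hlog 1 0 (by linarith))).add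
    (hlog 1 1 (by linarith))).sub (hlog (-1) 1 (by linarith))).div_const 2
  have h2q : (2 - q) ≠ 0 := by linarith
  have h1q : (1 - q) ≠ 0 := by linarith
  have h1q' : (1 + q) ≠ 0 := by linarith
  have e : fskewDeriv = fun x =>
      (log (-1 * x + 2) - log (1 * x + 0) + log (1 * x + 1) - log (-1 * x + 1)) / 2 := by
    funext x
    simp only [fskewDeriv]
    ring_nf
  rw [e]
  refine h.congr_deriv ?_
  rw [fskewDeriv2, show 1 - q ^ 2 = (1 - q) * (1 + q) by ring, show -1 * q + 2 = 2 - q by ring,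
    show 1 * q + 0 = q by ring, show 1 * q + 1 = 1 + q by ring, show -1 * q + 1 = 1 - q by ring]
  field_simp
  ring

lemma fskewDeriv2_nonpos {q : ℝ} (h0 : 0 < q) (h1 : q ≤ 1 / 2) : fskewDeriv2 q ≤ 0 := by
  have : 0 ≤ 1 - q ^ 2 := by nlinarith
  have : 0 ≤ 2 - q := by linarith
  exact div_nonpos_of_nonpos_of_nonneg (by linarith) (by positivity)

lemma fskewDeriv2_nonneg {q : ℝ} (h0 : 1 / 2 ≤ q) (h1 : q < 1) : 0 ≤ fskewDeriv2 q := by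
  have : 0 ≤ q := by linarith
  have : 0 ≤ 1 - q ^ 2 := by nlinarith
  have : 0 ≤ 2 - q := by linarith
  exact div_nonneg (by linarith) (by positivity)

lemma ConcaveOn.le_add_mul_sub_of_hasDerivAt {S : Set ℝ} {f : ℝ → ℝ} {x y f' : ℝ}
    (hf : ConcaveOn ℝ S f) (hx : x ∈ S) (hy : y ∈ S) (hd : HasDerivAt f f' x) :
    f y ≤ f x + f' * (y - x) := by
  rcases lt_trichotomy y x with hyx | rfl | hxy
  · have h := hf.le_slope_of_hasDerivAt hy hx hyx hd
    rw [slope_def_field, le_div_iff₀ (sub_pos.2 hyx)] at h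
    linarith
  · simp
  · have h := hf.slope_le_of_hasDerivAt hx hy hxy hd
    rw [slope_def_field, div_le_iff₀ (sub_pos.2 hxy)] at h
    linarith

lemma concaveOn_fskew : ConcaveOn ℝ (Set.Icc 0 (1 / 2)) fskew := by
  refine concaveOn_of_hasDerivWithinAt2_nonpos (f' := fskewDeriv) (f'' := fskewDeriv2)
    (convex_Icc _ _) continuous_fskew.continuousOn
    (fun x hx => ?_) (fun x hx => ?_) (fun x hx => ?_) <;> rw [interior_Icc] at hx
  · exact (hasDerivAt_fskew hx.1 (by linarith [hx.2])).hasDerivWithinAt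
  · exact (hasDerivAt_fskewDeriv hx.1 (by linarith [hx.2])).hasDerivWithinAt
  · exact fskewDeriv2_nonpos hx.1 hx.2.le

lemma convexOn_fskew : ConvexOn ℝ (Set.Icc (1 / 2) 1) fskew := by
  refine convexOn_of_hasDerivWithinAt2_nonneg (f' := fskewDeriv) (f'' := fskewDeriv2)
    (convex_Icc _ _) continuous_fskew.continuousOn
    (fun x hx => ?_) (fun x hx => ?_) (fun x hx => ?_) <;> rw [interior_Icc] at hx
  · exact (hasDerivAt_fskew (by linarith [hx.1]) hx.2).hasDerivWithinAt
  · exact (hasDerivAt_fskewDeriv (by linarith [hx.1]) hx.2).hasDerivWithinAt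
  · exact fskewDeriv2_nonneg hx.1.le hx.2

lemma negMulLog_half : negMulLog (1 / 2 : ℝ) = log 2 / 2 := by
  rw [negMulLog, one_div, log_inv]
  ring

lemma fskew_zero : fskew 0 = -log 2 := by
  norm_num [fskew, binH, negMulLog_half]

lemma fskew_half : fskew (1 / 2) = 0 := by
  norm_num [fskew, binH]

lemma fskew_one : fskew 1 = log 2 := by
  norm_num [fskew, binH, negMulLog_half]

lemma fskew_add_fskewDeriv_mul_at_one_fifth :
    fskew (1 / 5) + fskewDeriv (1 / 5) * (1 - 1 / 5) = log 2 := by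
  have h10 : log (10 : ℝ) = log 2 + log 5 := by
    rw [show (10 : ℝ) = 2 * 5 by norm_num, log_mul (by norm_num) (by norm_num)]
  have h9 : log (9 : ℝ) = 2 * log 3 := by
    rw [show (9 : ℝ) = 3 ^ 2 by norm_num, log_pow]
    norm_num
  have h6 : log (6 : ℝ) = log 2 + log 3 := by
    rw [show (6 : ℝ) = 2 * 3 by norm_num, log_mul (by norm_num) (by norm_num)]
  have h4 : log (4 : ℝ) = 2 * log 2 := by
    rw [show (4 : ℝ) = 2 ^ 2 by norm_num, log_pow]
    norm_num
  simp only [fskew, binH, fskewDeriv, negMulLog]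
  norm_num [log_div, h10, h9, h6, h4]
  ring

/-- The constant `1 / 5` is where the tangent to `fskew` at `η` passes through
`(1, fskew 1) = (1, log 2)`. -/
lemma log_two_le_fskew_add_fskewDeriv_mul {η : ℝ} (h0 : 0 < η) (h5 : η ≤ 1 / 5) :
    log 2 ≤ fskew η + fskewDeriv η * (1 - η) := by
  have hT : ∀ x, 0 < x → x < 1 →
      HasDerivAt (fun q => fskew q + fskewDeriv q * (1 - q)) (fskewDeriv2 x * (1 - x)) x :=
    fun x hx0 hx1 => ((hasDerivAt_fskew hx0 hx1).add ((hasDerivAt_fskewDeriv hx0 hx1).mul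
      ((hasDerivAt_id x).const_sub 1))).congr_deriv (by simp)
  have hanti : AntitoneOn (fun q => fskew q + fskewDeriv q * (1 - q)) (Set.Ioc 0 (1 / 5)) := by
    refine antitoneOn_of_hasDerivWithinAt_nonpos (f' := fun q => fskewDeriv2 q * (1 - q))
      (convex_Ioc _ _) (fun x hx => ?_) (fun x hx => ?_) (fun x hx => ?_) <;>
      try rw [interior_Ioc] at hx
    · exact (hT x hx.1 (by linarith [hx.2])).continuousAt.continuousWithinAt
    · exact (hT x hx.1 (by linarith [hx.2])).hasDerivWithinAt
    · exact mul_nonpos_of_nonpos_of_nonneg (fskewDeriv2_nonpos hx.1 (by linarith [hx.2]))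
        (by linarith [hx.2])
  have h := hanti ⟨h0, h5⟩ ⟨by norm_num, le_rfl⟩ h5
  dsimp only at h
  rwa [fskew_add_fskewDeriv_mul_at_one_fifth] at h

lemma fskew_le_tangent {η q : ℝ} (hη0 : 0 < η) (hη5 : η ≤ 1 / 5) (hq0 : 0 ≤ q) (hq1 : q ≤ 1) :
    fskew q ≤ fskew η + fskewDeriv η * (q - η) := by
  have hη : η ∈ Set.Icc (0 : ℝ) (1 / 2) := ⟨hη0.le, by linarith⟩
  have hd := hasDerivAt_fskew hη0 (by linarith)
  rcases le_or_gt q (1 / 2) with hq | hq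
  · exact concaveOn_fskew.le_add_mul_sub_of_hasDerivAt hη ⟨hq0, hq⟩ hd
  · -- `fskew` lies below its chord on `[1/2, 1]`, and the chord lies below the tangent at both ends
    have hchord := convexOn_fskew.2 (Set.left_mem_Icc.2 (by norm_num))
      (Set.right_mem_Icc.2 (by norm_num)) (by linarith : (0 : ℝ) ≤ 2 - 2 * q)
      (by linarith : (0 : ℝ) ≤ 2 * q - 1) (by ring)
    have hhalf := concaveOn_fskew.le_add_mul_sub_of_hasDerivAt hη
      (Set.right_mem_Icc.2 (by norm_num)) hd
    have hone := log_two_le_fskew_add_fskewDeriv_mul hη0 hη5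
    simp only [smul_eq_mul, fskew_half, fskew_one] at hchord hhalf
    rw [show (2 - 2 * q) * (1 / 2) + (2 * q - 1) * 1 = q by ring] at hchord
    nlinarith

/-- If `P(Z = z, X = 0) = u` and `P(Z = z, X = 1) = v`, then `bsscGap u v` is the contribution
of `z` to `H(Z, Y₂) - H(Z, Y₁)`. -/
noncomputable def bsscGap (u v : ℝ) : ℝ :=
  negMulLog (v / 2) + negMulLog (u + v / 2) - negMulLog (u / 2) - negMulLog (u / 2 + v)

lemma bsscGap_mul (p u v : ℝ) : bsscGap (p * u) (p * v) = p * bsscGap u v := by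
  simp only [bsscGap, mul_div_assoc, ← mul_add, negMulLog_mul]
  ring

lemma bsscGap_one_sub (t : ℝ) : bsscGap (1 - t) t = fskew t := by
  simp only [bsscGap, fskew, binH]
  ring_nf

lemma bsscGap_zero_right (u : ℝ) : bsscGap u 0 = u * fskew 0 := by
  rw [← bsscGap_one_sub, sub_zero, ← bsscGap_mul, mul_one, mul_zero]

lemma bsscGap_le {η u v : ℝ} (hη0 : 0 < η) (hη5 : η ≤ 1 / 5) (hu : 0 ≤ u) (hv : 0 ≤ v) :
    bsscGap u v ≤ (fskew η - fskewDeriv η * η) * u + (fskew η + fskewDeriv η * (1 - η)) * v := by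
  rcases (add_nonneg hu hv).eq_or_lt with h | h
  · obtain ⟨rfl, rfl⟩ : u = 0 ∧ v = 0 := ⟨by linarith, by linarith⟩
    simp [bsscGap_zero_right]
  · set t := v / (u + v)
    have ht : u + v - v = (u + v) * (1 - t) := by
      simp only [t]
      field_simp
    have hrep : bsscGap u v = (u + v) * fskew t := by
      rw [← bsscGap_one_sub, ← bsscGap_mul, ← ht, mul_div_cancel₀ _ h.ne', add_sub_cancel_right]
    have hline := fskew_le_tangent hη0 hη5 (q := t) (by positivity)
      ((div_le_one h).2 (by linarith))
    calc bsscGap u v ≤ (u + v) * (fskew η + fskewDeriv η * (t - η)) := by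
          rw [hrep]
          exact mul_le_mul_of_nonneg_left hline h.le
      _ = _ := by
          simp only [t]
          field_simp
          ring

lemma sum_bsscGap_le {ι : Type*} [Fintype ι] {u v : ι → ℝ} (hu : ∀ i, 0 ≤ u i)
    (hv : ∀ i, 0 ≤ v i) (hsum : ∑ i, u i + ∑ i, v i = 1) (h5 : ∑ i, v i ≤ 1 / 5) :
    ∑ i, bsscGap (u i) (v i) ≤ fskew (∑ i, v i) := by
  rcases (Finset.sum_nonneg fun i _ => hv i).eq_or_lt with h0 | h0
  · have hv0 : ∀ i, v i = 0 := fun i =>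
      (Finset.sum_eq_zero_iff_of_nonneg fun i _ => hv i).1 h0.symm i (Finset.mem_univ i)
    simp only [hv0, bsscGap_zero_right, ← Finset.sum_mul, Finset.sum_const_zero] at hsum ⊢
    simp [show ∑ i, u i = 1 by simpa using hsum]
  · calc ∑ i, bsscGap (u i) (v i)
        ≤ ∑ i, ((fskew (∑ i, v i) - fskewDeriv (∑ i, v i) * ∑ i, v i) * u i
          + (fskew (∑ i, v i) + fskewDeriv (∑ i, v i) * (1 - ∑ i, v i)) * v i) :=
          Finset.sum_le_sum fun i _ => bsscGap_le h0 h5 (hu i) (hv i)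
      _ = fskew (∑ i, v i) := by
          rw [Finset.sum_add_distrib, ← Finset.mul_sum, ← Finset.mul_sum,
            show ∑ i, u i = 1 - ∑ i, v i by linarith]
          ring

section BSSC

variable {Ω : Type*} [MeasurableSpace Ω] {μ : Measure Ω} [IsFiniteMeasure μ]
  {C : Type*} [Fintype C] [MeasurableSpace C] [MeasurableSingletonClass C]
  {Z : Ω → C} {X Y1 Y2 : Ω → Bool}

lemma IsChannelOutput.entropy_snd_sub_entropy_fst_of_bssc
    (h : IsChannelOutput μ Z X (fun ω => (Y1 ω, Y2 ω)) (fun x y => bsscK x y.1 y.2))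
    (hZ : Measurable Z) (hX : Measurable X) (hY1 : Measurable Y1) (hY2 : Measurable Y2) :
    entropy μ (fun ω => (Z ω, Y2 ω)) - entropy μ (fun ω => (Z ω, Y1 ω))
      = ∑ z, bsscGap (prob μ (fun ω => (Z ω, X ω)) (z, false))
          (prob μ (fun ω => (Z ω, X ω)) (z, true)) := by
  have h1 := (h.fst hZ hX hY1 hY2).prob_prod hZ hX hY1
  have h2 := (h.snd hZ hX hY2 hY1).prob_prod hZ hX hY2
  simp only [entropy, Fintype.sum_prod_type, h1, h2, ← Finset.sum_sub_distrib]
  refine Finset.sum_congr rfl fun z _ => ?_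
  simp [bsscK, bsscGap]
  ring_nf

lemma IsChannelOutput.entropy_prod_snd_eq_of_bssc
    (h : IsChannelOutput μ Z X (fun ω => (Y1 ω, Y2 ω)) (fun x y => bsscK x y.1 y.2))
    (hZ : Measurable Z) (hX : Measurable X) (hY1 : Measurable Y1) (hY2 : Measurable Y2) :
    entropy μ (fun ω => (Z ω, X ω, Y2 ω))
      = entropy μ (fun ω => (Z ω, X ω)) + prob μ X true * log 2 := by
  rw [(h.snd hZ hX hY2 hY1).entropy_eq hZ hX (fun x => by cases x <;> norm_num [bsscK])]
  norm_num [bsscK, negMulLog_half]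

lemma IsChannelOutput.entropy_add_le_entropy_prod_of_bssc
    (h : IsChannelOutput μ Z X (fun ω => (Y1 ω, Y2 ω)) (fun x y => bsscK x y.1 y.2))
    (hZ : Measurable Z) (hX : Measurable X) (hY1 : Measurable Y1) (hY2 : Measurable Y2) :
    entropy μ Z + prob μ X true * log 2 ≤ entropy μ (fun ω => (Z ω, Y2 ω)) := by
  have hchain := h.entropy_prod_snd_eq_of_bssc hZ hX hY1 hY2
  have hcmi := condMutualInfo_nonneg μ hX hY2 hZ
  have hperm : entropy μ (fun ω => (X ω, Y2 ω, Z ω)) = entropy μ (fun ω => (Z ω, X ω, Y2 ω)) :=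
    entropy_congr_equiv μ ⟨fun p => (p.2.1, p.2.2, p.1), fun p => (p.2.2, p.1, p.2.1),
      fun _ => rfl, fun _ => rfl⟩ fun _ => rfl
  rw [condMutualInfo, hperm, hchain, entropy_prod_comm μ Z X, entropy_prod_comm μ Z Y2] at hcmi
  linarith

end BSSC

lemma IsChannelOutput.entropy_add_entropy_prod_le_of_bssc {Ω C : Type*} [MeasurableSpace Ω]
    {μ : Measure Ω} [IsProbabilityMeasure μ] [Fintype C] [MeasurableSpace C]
    [MeasurableSingletonClass C] {Z : Ω → C} {X Y1 Y2 : Ω → Bool}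
    (h : IsChannelOutput μ Z X (fun ω => (Y1 ω, Y2 ω)) (fun x y => bsscK x y.1 y.2))
    (hZ : Measurable Z) (hX : Measurable X) (hY1 : Measurable Y1) (hY2 : Measurable Y2)
    (h5 : prob μ X true ≤ 1 / 5) :
    entropy μ Y1 + entropy μ (fun ω => (Z ω, Y2 ω))
      ≤ entropy μ (fun ω => (Z ω, Y1 ω)) + entropy μ Y2 := by
  have hXZ : ∀ x, ∑ z, prob μ (fun ω => (Z ω, X ω)) (z, x) = prob μ X x :=
    sum_prob_prod_eq_prob μ hZ hX
  have hX1 : prob μ X true + prob μ X false = 1 := by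
    simpa using sum_prob_eq_one μ hX
  have hgapZ := h.entropy_snd_sub_entropy_fst_of_bssc hZ hX hY1 hY2
  have hgap := (h.comp_left hZ hX (hY1.prodMk hY2) fun _ => ()).entropy_snd_sub_entropy_fst_of_bssc
    measurable_const hX hY1 hY2
  simp only [entropy_unit_prod, Fintype.univ_unit, Finset.sum_singleton] at hgap
  have := sum_bsscGap_le (fun z => prob_nonneg μ _ (z, false)) (fun z => prob_nonneg μ _ (z, true))
    (by rw [hXZ, hXZ, add_comm, hX1]) (by rwa [hXZ])
  rw [prob_unit_prod, prob_unit_prod, show prob μ X false = 1 - prob μ X true by linarith,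
    bsscGap_one_sub] at hgap
  rw [hXZ] at this
  linarith

lemma bsscK_not (x y1 y2 : Bool) : bsscK (!x) (!y2) (!y1) = bsscK x y1 y2 := by
  cases x <;> cases y1 <;> cases y2 <;> simp [bsscK]

lemma IsBSSC.not_swap {Ω : Type*} [MeasurableSpace Ω] {μ : Measure Ω} {X Y1 Y2 : Ω → Bool}
    (h : IsBSSC μ X Y1 Y2) : IsBSSC μ (fun ω => !X ω) (fun ω => !Y2 ω) (fun ω => !Y1 ω) := by
  intro x y1 y2
  have hX : prob μ (fun ω => !X ω) x = prob μ X (!x) :=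
    prob_congr μ fun ω => Bool.not_eq_eq_eq_not
  have hXY : prob μ (fun ω => (!X ω, !Y2 ω, !Y1 ω)) (x, y1, y2)
      = prob μ (fun ω => (X ω, Y1 ω, Y2 ω)) (!x, !y2, !y1) :=
    prob_congr μ fun ω => by simp only [Prod.mk.injEq, Bool.not_eq_eq_eq_not]; tauto
  rw [hXY, hX, h, bsscK_not]

section Main

variable {Ω A B : Type*} [MeasurableSpace Ω] {μ : Measure Ω} [IsProbabilityMeasure μ]
  [Fintype A] [MeasurableSpace A] [MeasurableSingletonClass A]
  [Fintype B] [MeasurableSpace B] [MeasurableSingletonClass B]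
  {U : Ω → A} {V : Ω → B} {X Y1 Y2 : Ω → Bool}

theorem mutualInfo_add_sub_le_of_prob_true_le (hU : Measurable U) (hV : Measurable V)
    (hX : Measurable X) (hY1 : Measurable Y1) (hY2 : Measurable Y2)
    (hMarkov : CondIndepGiven μ (fun ω => (U ω, V ω)) X (fun ω => (Y1 ω, Y2 ω)))
    (hBSSC : IsBSSC μ X Y1 Y2) (h5 : prob μ X true ≤ 1 / 5) :
    mutualInfo μ U Y1 + mutualInfo μ V Y2 - mutualInfo μ U V ≤ mutualInfo μ X Y2 := by
  have hUV := hU.prodMk hV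
  have hK : IsChannelOutput μ (fun ω => (U ω, V ω)) X (fun ω => (Y1 ω, Y2 ω))
      (fun x y => bsscK x y.1 y.2) := hMarkov.isChannelOutput fun x y => hBSSC x y.1 y.2
  have hjensen :=
    (hK.comp_left hUV hX (hY1.prodMk hY2) Prod.fst).entropy_add_entropy_prod_le_of_bssc
      hU hX hY1 hY2 h5
  have hcond := hK.entropy_add_le_entropy_prod_of_bssc hUV hX hY1 hY2
  have hXY2 := (hK.comp_left hUV hX (hY1.prodMk hY2) fun _ => ()).entropy_prod_snd_eq_of_bssc
    measurable_const hX hY1 hY2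
  rw [entropy_unit_prod, entropy_unit_prod] at hXY2
  have hassoc : entropy μ (fun ω => ((U ω, V ω), Y2 ω)) = entropy μ (fun ω => (U ω, V ω, Y2 ω)) :=
    entropy_congr_equiv μ (Equiv.prodAssoc A B Bool).symm fun _ => rfl
  have hsubmod := condMutualInfo_nonneg μ hU hV hY2
  rw [condMutualInfo] at hsubmod
  simp only [mutualInfo]
  linarith

theorem mutualInfo_add_sub_le_of_prob_false_le (hU : Measurable U) (hV : Measurable V)
    (hX : Measurable X) (hY1 : Measurable Y1) (hY2 : Measurable Y2)
    (hMarkov : CondIndepGiven μ (fun ω => (U ω, V ω)) X (fun ω => (Y1 ω, Y2 ω)))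
    (hBSSC : IsBSSC μ X Y1 Y2) (h5 : prob μ X false ≤ 1 / 5) :
    mutualInfo μ U Y1 + mutualInfo μ V Y2 - mutualInfo μ U V ≤ mutualInfo μ X Y1 := by
  have hnot : Measurable not := measurable_of_countable _
  have hX' : prob μ (fun ω => !X ω) true = prob μ X false :=
    prob_congr μ fun ω => Bool.not_eq_eq_eq_not
  have h := mutualInfo_add_sub_le_of_prob_true_le (U := V) (V := U) (X := fun ω => !X ω)
    (Y1 := fun ω => !Y2 ω) (Y2 := fun ω => !Y1 ω) hV hU (hnot.comp hX) (hnot.comp hY2)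
    (hnot.comp hY1)
    (hMarkov.congr_equiv (Equiv.prodComm A B) Equiv.boolNot
      ((Equiv.prodComm _ _).trans (Equiv.boolNot.prodCongr Equiv.boolNot))
      (fun _ => rfl) (fun _ => rfl) fun _ => rfl)
    hBSSC.not_swap (hX' ▸ h5)
  have hVY2 : mutualInfo μ V (fun ω => !Y2 ω) = mutualInfo μ V Y2 :=
    mutualInfo_congr_equiv μ (Equiv.refl B) Equiv.boolNot (fun _ => rfl) fun _ => rfl
  have hUY1 : mutualInfo μ U (fun ω => !Y1 ω) = mutualInfo μ U Y1 :=
    mutualInfo_congr_equiv μ (Equiv.refl A) Equiv.boolNot (fun _ => rfl) fun _ => rfl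
  have hXY1 : mutualInfo μ (fun ω => !X ω) (fun ω => !Y1 ω) = mutualInfo μ X Y1 :=
    mutualInfo_congr_equiv μ Equiv.boolNot Equiv.boolNot (fun _ => rfl) fun _ => rfl
  rw [hVY2, hUY1, hXY1, mutualInfo_comm μ U V] at h
  linarith

end Main

/-- For `(U,V) → X → (Y₁,Y₂)` with `(Y₁,Y₂)` a BSSC (`p = 1/2`)
output of `X`: if `min {P(X = 0), P(X = 1)} ≤ 1/5`, then
`I(U;Y₁) + I(V;Y₂) − I(U;V) ≤ max {I(X;Y₁), I(X;Y₂)}`. -/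
theorem stmt15 {Ω A B : Type*} [MeasurableSpace Ω]
    (μ : Measure Ω) [IsProbabilityMeasure μ]
    [Fintype A] [MeasurableSpace A] [MeasurableSingletonClass A]
    [Fintype B] [MeasurableSpace B] [MeasurableSingletonClass B]
    (U : Ω → A) (V : Ω → B) (X Y1 Y2 : Ω → Bool)
    (hU : Measurable U) (hV : Measurable V) (hX : Measurable X)
    (hY1 : Measurable Y1) (hY2 : Measurable Y2)
    (hMarkov : CondIndepGiven μ (fun ω => (U ω, V ω)) X (fun ω => (Y1 ω, Y2 ω)))
    (hBSSC : IsBSSC μ X Y1 Y2)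
    (hη : min (prob μ X false) (prob μ X true) ≤ 1 / 5) :
    mutualInfo μ U Y1 + mutualInfo μ V Y2 - mutualInfo μ U V
      ≤ max (mutualInfo μ X Y1) (mutualInfo μ X Y2) := by
  rcases min_le_iff.1 hη with h5 | h5
  · exact (mutualInfo_add_sub_le_of_prob_false_le hU hV hX hY1 hY2 hMarkov hBSSC h5).trans
      (le_max_left _ _)
  · exact (mutualInfo_add_sub_le_of_prob_true_le hU hV hX hY1 hY2 hMarkov hBSSC h5).trans
      (le_max_right _ _)
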